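/- arXiv:1611.02329 — 4 statements merged into one kernel-verified Lean document; each statement's English description precedes it below -/
import Mathlib

section
/- Let $\hat{y}, \mu, y_A \in \mathbb{R}^k$ with $\hat{y} \neq y_A$. The pair $(\alpha^*, \bar{y}^*) = (0, y_A)$ satisfies the equilibrium conditions (i.e., $\alpha = 0$ is the sensor's best response to $\bar{y} = y_A$, and $\bar{y} = y_A$ is the attacker's best response to $\alpha = 0$) if and only if $(y_A - \mu)^T(\hat{y} - \mu) \geq \|y_A - \mu\|^2$. -/
open RealInnerProductSpace

/-- `(α*, ȳ*) = (0, y_A)` satisfies the equilibrium conditions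
(sensor's best response to `ȳ = y_A` is `α = 0`, and the attacker's best response
to `α = 0` is `y_A`) if and only if `⟪y_A - μ, ŷ - μ⟫ ≥ ‖y_A - μ‖²`. -/
theorem stmt3 {k : ℕ} (yhat mu yA zeta : EuclideanSpace ℝ (Fin k))
    (hne : yhat ≠ yA) :
    (⟪yA - mu, yhat - yA⟫ ≥ 0 ∧
        (1 - (0 : ℝ))⁻¹ • (yA - (0 : ℝ) • zeta) = yA)
    ↔ ⟪yA - mu, yhat - mu⟫ ≥ ‖yA - mu‖ ^ 2 := by
  have h2 : (1 - (0 : ℝ))⁻¹ • (yA - (0 : ℝ) • zeta) = yA := by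
    simp
  have key : ⟪yA - mu, yhat - yA⟫ = ⟪yA - mu, yhat - mu⟫ - ‖yA - mu‖ ^ 2 := by
    have : yhat - yA = (yhat - mu) - (yA - mu) := by abel
    rw [this, inner_sub_right, real_inner_self_eq_norm_sq]
  constructor
  · rintro ⟨h1, -⟩; linarith [key ▸ h1]
  · intro h; exact ⟨by rw [key]; linarith, h2⟩
end

section
/- Let $\mu, \zeta, \hat{y} \in \mathbb{R}^k$, let $P$ be an affine subspace (plane) of $\mathbb{R}^k$ containing $\zeta$ and $\hat{y}$, and let $\hat{\mu}$ be the orthogonal projection of $\mu$ onto $P$. If $\|\zeta - \mu\| \leq \frac{\epsilon}{1+\epsilon}\|\hat{y}-\mu\|$ for some $\epsilon \in (0,1]$, then $\|\zeta - \hat{\mu}\| \leq \epsilon\,\|\hat{y}-\hat{\mu}\|$. -/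
namespace EuclideanGeometry

variable {𝕜 V P : Type*} [RCLike 𝕜] [NormedAddCommGroup V] [InnerProductSpace 𝕜 V]
  [MetricSpace P] [NormedAddTorsor V P]
  {s : AffineSubspace 𝕜 P} [Nonempty s] [s.direction.HasOrthogonalProjection] {p₁ : P}

theorem dist_orthogonalProjection_le_dist_of_mem (p₂ : P) (hp₁ : p₁ ∈ s) :
    dist p₁ (orthogonalProjection s p₂) ≤ dist p₁ p₂ := by
  refine nonneg_le_nonneg_of_sq_le_sq dist_nonneg ?_
  rw [dist_sq_eq_dist_orthogonalProjection_sq_add_dist_orthogonalProjection_sq p₂ hp₁]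
  exact le_add_of_nonneg_right (mul_self_nonneg _)

theorem dist_self_orthogonalProjection_le_dist_of_mem (p₂ : P) (hp₁ : p₁ ∈ s) :
    dist p₂ (orthogonalProjection s p₂) ≤ dist p₁ p₂ := by
  rw [dist_orthogonalProjection_eq_infDist, dist_comm]
  exact Metric.infDist_le_dist_of_mem hp₁

end EuclideanGeometry

theorem dist_le_mul_dist_of_le_div_one_add {α : Type*} [PseudoMetricSpace α] {z m m' y : α}
    {ε : ℝ} (hε : 0 ≤ ε) (hm : dist m m' ≤ dist z m)
    (h : dist z m ≤ ε / (1 + ε) * dist y m) :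
    dist z m ≤ ε * dist y m' := by
  rw [div_mul_eq_mul_div, le_div_iff₀ (by linarith)] at h
  have hym : dist y m ≤ dist y m' + dist z m :=
    (dist_triangle_right y m m').trans (by gcongr)
  have : dist z m * (1 + ε) ≤ ε * dist y m' + ε * dist z m :=
    calc dist z m * (1 + ε) ≤ ε * dist y m := h
      _ ≤ ε * (dist y m' + dist z m) := by gcongr
      _ = ε * dist y m' + ε * dist z m := mul_add _ _ _
  linarith

theorem stmt7_general {k : ℕ} (mu zeta yhat : EuclideanSpace ℝ (Fin k))
    (P : AffineSubspace ℝ (EuclideanSpace ℝ (Fin k)))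
    [Nonempty P] [Submodule.HasOrthogonalProjection P.direction]
    (hzeta : zeta ∈ P)
    (muhat : EuclideanSpace ℝ (Fin k))
    (hproj : muhat = (EuclideanGeometry.orthogonalProjection P mu : EuclideanSpace ℝ (Fin k)))
    (ε : ℝ) (hε : ε ∈ Set.Ioc (0 : ℝ) 1)
    (hmm : ‖zeta - mu‖ ≤ (ε / (1 + ε)) * ‖yhat - mu‖) :
    ‖zeta - muhat‖ ≤ ε * ‖yhat - muhat‖ := by
  subst hproj
  simp only [← dist_eq_norm] at hmm ⊢
  exact (EuclideanGeometry.dist_orthogonalProjection_le_dist_of_mem mu hzeta).trans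
    (dist_le_mul_dist_of_le_div_one_add hε.1.le
      (EuclideanGeometry.dist_self_orthogonalProjection_le_dist_of_mem mu hzeta) hmm)

/-- Mismatch bound, Lemma 2: if `‖ζ - μ‖ ≤ (ε/(1+ε)) ‖ŷ - μ‖` and
`μ̂` is the orthogonal projection of `μ` onto an affine subspace `P` containing
`ζ` and `ŷ`, then `‖ζ - μ̂‖ ≤ ε ‖ŷ - μ̂‖`. -/
theorem stmt7 {k : ℕ} (mu zeta yhat : EuclideanSpace ℝ (Fin k))
    (P : AffineSubspace ℝ (EuclideanSpace ℝ (Fin k)))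
    [Nonempty P] [Submodule.HasOrthogonalProjection P.direction]
    (hzeta : zeta ∈ P) (hyhat : yhat ∈ P)
    (muhat : EuclideanSpace ℝ (Fin k))
    (hproj : muhat = (EuclideanGeometry.orthogonalProjection P mu : EuclideanSpace ℝ (Fin k)))
    (ε : ℝ) (hε : ε ∈ Set.Ioc (0 : ℝ) 1)
    (hmm : ‖zeta - mu‖ ≤ (ε / (1 + ε)) * ‖yhat - mu‖) :
    ‖zeta - muhat‖ ≤ ε * ‖yhat - muhat‖ :=
  stmt7_general mu zeta yhat P hzeta muhat hproj ε hε hmm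
end

section
/- Let $\hat{y}, \hat{\mu}, y_A, \bar{y}$ be points in the Euclidean plane $\mathbb{R}^2$, with $\bar{y}\neq\hat{y}$ and $y_A\neq\hat{y}$. Suppose (a) $(\hat{y}-\hat{\mu})^T(\hat{y}-\bar{y}) > 0$ and $(\bar{y}-\hat{\mu})^T(\hat{y}-\bar{y}) < 0$ (i.e., the best-response weight $\alpha^*(\bar{y})$ lies in $(0,1)$), and (b) $\bar{y}$ lies in the closed half-plane bounded by the line through $\hat{y}$ and $y_A$ that does not contain $\hat{\mu}$. Then the length of the orthogonal projection of $\hat{y}-\hat{\mu}$ onto the direction $y_A - \hat{y}$ is at least the length of the orthogonal projection of $\hat{y}-\hat{\mu}$ onto the direction $\bar{y}-\hat{y}$, i.e., $\frac{|(\hat{y}-\hat{\mu})^T(y_A-\hat{y})|}{\|y_A-\hat{y}\|} \geq \frac{|(\hat{y}-\hat{\mu})^T(\bar{y}-\hat{y})|}{\|\bar{y}-\hat{y}\|}$. -/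
open RealInnerProductSpace

/-- 2D cross product (determinant) used to express sides of a line in the plane. -/
noncomputable def det2 (u v : EuclideanSpace ℝ (Fin 2)) : ℝ := u 0 * v 1 - u 1 * v 0

private lemma sq_ineq_aux (s t c d : ℝ) (ht : t < 0) (hkey : c * (s * d) ≤ t * c ^ 2) :
    t ^ 2 * c ^ 2 ≤ s ^ 2 * d ^ 2 := by
  rcases lt_trichotomy c 0 with hc | hc | hc
  · have h1 : t * c ≤ s * d := by nlinarith [hkey]
    have h2 : 0 < t * c := mul_pos_of_neg_of_neg ht hc
    nlinarith [h1, h2]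
  · subst hc; simp; positivity
  · have h1 : s * d ≤ t * c := by nlinarith [hkey]
    have h2 : t * c < 0 := mul_neg_of_neg_of_pos ht hc
    nlinarith [h1, h2]

private lemma coord_aux (u0 u1 a0 a1 b0 b1 na nb : ℝ)
    (hna : na ^ 2 = a0 ^ 2 + a1 ^ 2) (hnb : nb ^ 2 = b0 ^ 2 + b1 ^ 2)
    (hnapos : 0 < na) (hnbpos : 0 < nb)
    (ht : u0 * b0 + u1 * b1 < 0)
    (hside : (a0 * b1 - a1 * b0) * (u0 * a1 - u1 * a0) ≤ 0) :
    |u0 * b0 + u1 * b1| * na ≤ |u0 * a0 + u1 * a1| * nb := by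
  have hr : 0 < u0 ^ 2 + u1 ^ 2 := by
    rcases eq_or_lt_of_le (by positivity : (0:ℝ) ≤ u0 ^ 2 + u1 ^ 2) with h | h
    · exfalso
      have h0 : u0 = 0 := by nlinarith [sq_nonneg u0, sq_nonneg u1]
      have h1 : u1 = 0 := by nlinarith [sq_nonneg u0, sq_nonneg u1]
      rw [h0, h1] at ht; simp at ht
    · exact h
  have hkey : (u0 * a1 - u1 * a0) * ((u0 * a0 + u1 * a1) * (u0 * b1 - u1 * b0))
      ≤ (u0 * b0 + u1 * b1) * (u0 * a1 - u1 * a0) ^ 2 := by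
    have h2 : (u0 ^ 2 + u1 ^ 2) * ((a0 * b1 - a1 * b0) * (u0 * a1 - u1 * a0)) ≤ 0 :=
      mul_nonpos_of_nonneg_of_nonpos (by positivity) hside
    nlinarith [h2]
  have hsq := sq_ineq_aux (u0 * a0 + u1 * a1) (u0 * b0 + u1 * b1)
    (u0 * a1 - u1 * a0) (u0 * b1 - u1 * b0) ht hkey
  -- squared inequality with norms
  have h5 : ((u0 * b0 + u1 * b1) ^ 2 * na ^ 2) * (u0 ^ 2 + u1 ^ 2)
      ≤ ((u0 * a0 + u1 * a1) ^ 2 * nb ^ 2) * (u0 ^ 2 + u1 ^ 2) := by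
    rw [hna, hnb]; nlinarith [hsq]
  have h6 : (u0 * b0 + u1 * b1) ^ 2 * na ^ 2 ≤ (u0 * a0 + u1 * a1) ^ 2 * nb ^ 2 :=
    le_of_mul_le_mul_right h5 hr
  have h7 : (|u0 * b0 + u1 * b1| * na) ^ 2 ≤ (|u0 * a0 + u1 * a1| * nb) ^ 2 := by
    rw [mul_pow, mul_pow, sq_abs, sq_abs]; exact h6
  nlinarith [h7, abs_nonneg (u0 * b0 + u1 * b1), abs_nonneg (u0 * a0 + u1 * a1),
    mul_nonneg (abs_nonneg (u0 * b0 + u1 * b1)) hnapos.le,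
    mul_nonneg (abs_nonneg (u0 * a0 + u1 * a1)) hnbpos.le]

/-- Lemma 3: if `α*(ȳ) ∈ (0,1)` and `ȳ` lies in the closed
half-plane bounded by the line through `ŷ` and `y_A` not containing `μ̂`, then
the projection of `ŷ-μ̂` onto the direction `y_A-ŷ` is at least as long as its
projection onto the direction `ȳ-ŷ`. -/
theorem stmt8 (yhat muhat yA ybar : EuclideanSpace ℝ (Fin 2))
    (h1 : ybar ≠ yhat) (h2 : yA ≠ yhat)
    (ha1 : ⟪yhat - muhat, yhat - ybar⟫ > 0)
    (ha2 : ⟪ybar - muhat, yhat - ybar⟫ < 0)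
    (hside : det2 (yA - yhat) (ybar - yhat) * det2 (yA - yhat) (muhat - yhat) ≤ 0) :
    |⟪yhat - muhat, yA - yhat⟫| / ‖yA - yhat‖
      ≥ |⟪yhat - muhat, ybar - yhat⟫| / ‖ybar - yhat‖ := by
  have hinner : ∀ x y : EuclideanSpace ℝ (Fin 2), ⟪x, y⟫ = x 0 * y 0 + x 1 * y 1 := by
    intro x y
    simp [PiLp.inner_apply, Fin.sum_univ_two, RCLike.inner_apply, mul_comm]
  have hbpos : (0:ℝ) < ‖ybar - yhat‖ := by
    rw [norm_pos_iff]; exact sub_ne_zero.mpr h1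
  have hapos : (0:ℝ) < ‖yA - yhat‖ := by
    rw [norm_pos_iff]; exact sub_ne_zero.mpr h2
  have hs : ⟪yhat - muhat, yA - yhat⟫
      = (yhat 0 - muhat 0) * (yA 0 - yhat 0) + (yhat 1 - muhat 1) * (yA 1 - yhat 1) := by
    rw [hinner]; rfl
  have ht : ⟪yhat - muhat, ybar - yhat⟫
      = (yhat 0 - muhat 0) * (ybar 0 - yhat 0) + (yhat 1 - muhat 1) * (ybar 1 - yhat 1) := by
    rw [hinner]; rfl
  have htneg : (yhat 0 - muhat 0) * (ybar 0 - yhat 0)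
      + (yhat 1 - muhat 1) * (ybar 1 - yhat 1) < 0 := by
    have e : ⟪yhat - muhat, yhat - ybar⟫
        = -((yhat 0 - muhat 0) * (ybar 0 - yhat 0)
          + (yhat 1 - muhat 1) * (ybar 1 - yhat 1)) := by
      rw [hinner]; show (yhat 0 - muhat 0) * (yhat 0 - ybar 0)
        + (yhat 1 - muhat 1) * (yhat 1 - ybar 1) = _
      ring
    rw [e] at ha1; linarith
  have hside' : ((yA 0 - yhat 0) * (ybar 1 - yhat 1) - (yA 1 - yhat 1) * (ybar 0 - yhat 0))
      * ((yhat 0 - muhat 0) * (yA 1 - yhat 1) - (yhat 1 - muhat 1) * (yA 0 - yhat 0)) ≤ 0 := by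
    have e1 : det2 (yA - yhat) (ybar - yhat)
        = (yA 0 - yhat 0) * (ybar 1 - yhat 1) - (yA 1 - yhat 1) * (ybar 0 - yhat 0) := rfl
    have e2 : det2 (yA - yhat) (muhat - yhat)
        = (yhat 0 - muhat 0) * (yA 1 - yhat 1) - (yhat 1 - muhat 1) * (yA 0 - yhat 0) := by
      show (yA 0 - yhat 0) * (muhat 1 - yhat 1) - (yA 1 - yhat 1) * (muhat 0 - yhat 0) = _
      ring
    rw [e1, e2] at hside
    exact hside
  have hna : ‖yA - yhat‖ ^ 2 = (yA 0 - yhat 0) ^ 2 + (yA 1 - yhat 1) ^ 2 := by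
    rw [← real_inner_self_eq_norm_sq, hinner]
    show (yA 0 - yhat 0) * (yA 0 - yhat 0) + (yA 1 - yhat 1) * (yA 1 - yhat 1) = _
    ring
  have hnb : ‖ybar - yhat‖ ^ 2 = (ybar 0 - yhat 0) ^ 2 + (ybar 1 - yhat 1) ^ 2 := by
    rw [← real_inner_self_eq_norm_sq, hinner]
    show (ybar 0 - yhat 0) * (ybar 0 - yhat 0) + (ybar 1 - yhat 1) * (ybar 1 - yhat 1) = _
    ring
  have hmain := coord_aux (yhat 0 - muhat 0) (yhat 1 - muhat 1)
    (yA 0 - yhat 0) (yA 1 - yhat 1) (ybar 0 - yhat 0) (ybar 1 - yhat 1)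
    ‖yA - yhat‖ ‖ybar - yhat‖ hna hnb hapos hbpos htneg hside'
  rw [ge_iff_le, div_le_div_iff₀ hbpos hapos, hs, ht]
  exact hmain
end

section
/- Let $\hat{y}, \mu, y_A, \bar{y} \in \mathbb{R}^k$ with $\alpha := \frac{(\bar{y}-\mu)^T(\bar{y}-\hat{y})}{\|\bar{y}-\hat{y}\|^2} \in (0,1)$, $\hat{y}\neq\bar{y}$, and let $\bar{y}' := \frac{y_A - \alpha\zeta}{1-\alpha}$ be the attacker's best response. Then $\bar{y}' - \zeta = \frac{\|\hat{y}-\bar{y}\|^2}{(\hat{y}-\mu)^T(\hat{y}-\bar{y})}\,(y_A - \zeta)$, provided $(\hat{y}-\mu)^T(\hat{y}-\bar{y}) \neq 0$. -/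
open RealInnerProductSpace

/-
The attacker's best response satisfies `ȳ' - ζ = (1 - α)⁻¹ • (y_A - ζ)`, so everything reduces to
computing `1 - α`. Splitting `ŷ - μ = (ŷ - ȳ) + (ȳ - μ)` gives
`⟪ȳ - μ, ȳ - ŷ⟫ + ⟪ŷ - μ, ŷ - ȳ⟫ = ‖ȳ - ŷ‖²`, hence `1 - α = ⟪ŷ - μ, ŷ - ȳ⟫ / ‖ŷ - ȳ‖²`.
-/

section InnerProduct

variable {E : Type*} [NormedAddCommGroup E] [InnerProductSpace ℝ E]

theorem inner_sub_add_inner_sub_eq_norm_sq (x y m : E) :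
    ⟪x - m, x - y⟫ + ⟪y - m, y - x⟫ = ‖x - y‖ ^ 2 := by
  have hsplit : y - m = -(x - y) + (x - m) := by abel
  rw [hsplit, ← neg_sub x y, inner_add_left, inner_neg_left, inner_neg_right, inner_neg_right,
    real_inner_self_eq_norm_sq]
  ring

theorem one_sub_inner_sub_div_norm_sq {x y : E} (hxy : x ≠ y) (m : E) :
    1 - ⟪x - m, x - y⟫ / ‖x - y‖ ^ 2 = ⟪y - m, y - x⟫ / ‖y - x‖ ^ 2 := by
  have hnorm : ‖x - y‖ ^ 2 ≠ 0 := pow_ne_zero _ (norm_ne_zero_iff.mpr (sub_ne_zero.mpr hxy))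
  rw [norm_sub_rev y x, eq_div_iff hnorm, sub_mul, div_mul_cancel₀ _ hnorm,
    ← inner_sub_add_inner_sub_eq_norm_sq x y m]
  ring

end InnerProduct

theorem inv_one_sub_smul_sub_smul_sub {V : Type*} [AddCommGroup V] [Module ℝ V]
    {α : ℝ} (hα : α ≠ 1) (a z : V) :
    (1 - α)⁻¹ • (a - α • z) - z = (1 - α)⁻¹ • (a - z) := by
  have h : 1 - α ≠ 0 := sub_ne_zero.mpr hα.symm
  match_scalars
  · ring
  · field_simp
    ring

theorem stmt17_general {k : ℕ} (yhat mu yA ybar zeta : EuclideanSpace ℝ (Fin k))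
    (α : ℝ) (hα : α = ⟪ybar - mu, ybar - yhat⟫ / ‖ybar - yhat‖ ^ 2)
    (hden : ⟪yhat - mu, yhat - ybar⟫ ≠ 0)
    (ybar' : EuclideanSpace ℝ (Fin k))
    (hbr : ybar' = (1 - α)⁻¹ • (yA - α • zeta)) :
    ybar' - zeta = (‖yhat - ybar‖ ^ 2 / ⟪yhat - mu, yhat - ybar⟫) • (yA - zeta) := by
  have hne : ybar ≠ yhat := by
    rintro rfl
    simp at hden
  have hone_sub : 1 - α = ⟪yhat - mu, yhat - ybar⟫ / ‖yhat - ybar‖ ^ 2 := by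
    rw [hα, one_sub_inner_sub_div_norm_sq hne]
  have hα_ne_one : α ≠ 1 := by
    intro h
    rw [h, sub_self, eq_comm, div_eq_zero_iff] at hone_sub
    exact hone_sub.elim hden (pow_ne_zero _ (norm_ne_zero_iff.mpr (sub_ne_zero.mpr hne.symm)))
  rw [hbr, inv_one_sub_smul_sub_smul_sub hα_ne_one, hone_sub, inv_div]

/-- one full round of the iterated best response maps `ȳ` (with
mixed sensor response `α ∈ (0,1)`) to a point `ȳ'` with
`ȳ' - ζ = (‖ŷ-ȳ‖² / ⟪ŷ-μ, ŷ-ȳ⟫) (y_A - ζ)`. -/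
theorem stmt17 {k : ℕ} (yhat mu yA ybar zeta : EuclideanSpace ℝ (Fin k))
    (hne : yhat ≠ ybar)
    (α : ℝ) (hα : α = ⟪ybar - mu, ybar - yhat⟫ / ‖ybar - yhat‖ ^ 2)
    (hmixed : α ∈ Set.Ioo (0 : ℝ) 1)
    (hden : ⟪yhat - mu, yhat - ybar⟫ ≠ 0)
    (ybar' : EuclideanSpace ℝ (Fin k))
    (hbr : ybar' = (1 - α)⁻¹ • (yA - α • zeta)) :
    ybar' - zeta = (‖yhat - ybar‖ ^ 2 / ⟪yhat - mu, yhat - ybar⟫) • (yA - zeta) :=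
  stmt17_general yhat mu yA ybar zeta α hα hden ybar' hbr
end
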